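/- Let $\mathscr{G}$ be a set of functions from $\mathscr{X}$ to $[0,+\infty]$. If $\mathscr{G}$ is VC-subgraph with VC-dimension at most $V$, then $\mathscr{G}^{-1}:=\{1/g : g\in\mathscr{G}\}$ (with conventions $1/0=+\infty$ and $1/(+\infty)=0$) is also VC-subgraph with VC-dimension at most $V$. -/
import Mathlib


open scoped ENNReal

/-- A family of `[0, +∞]`-valued functions shatters a finite set of points `(x, u) ∈ X × ℝ`
through its subgraphs `{(x, u) : f x > u}` (for `u < 0` the condition `f x > u` always holds). -/
def ShattersSubgraphENN {X : Type*} (ℱ : Set (X → ℝ≥0∞)) (s : Finset (X × ℝ)) : Prop :=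
  ∀ T ⊆ (s : Set (X × ℝ)), ∃ f ∈ ℱ,
    (s : Set (X × ℝ)) ∩ {p | p.2 < 0 ∨ ENNReal.ofReal p.2 < f p.1} = T

/-- If `𝒢`, a set of functions `X → [0, +∞]`, is VC-subgraph with VC-dimension at
most `V`, then `𝒢⁻¹ = {1/g : g ∈ 𝒢}` (with `1/0 = +∞`, `1/+∞ = 0`, as for `ℝ≥0∞`) is also
VC-subgraph with VC-dimension at most `V`. -/
theorem vc_subgraph_inv
    {X : Type*} (𝒢 : Set (X → ℝ≥0∞)) (V : ℕ)
    (h : ∀ s : Finset (X × ℝ), ShattersSubgraphENN 𝒢 s → s.card ≤ V) :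
    ∀ s : Finset (X × ℝ),
      ShattersSubgraphENN {h | ∃ g ∈ 𝒢, h = fun x => (g x)⁻¹} s → s.card ≤ V := by
  intro s hs
  classical
  -- Step 1: all second coordinates are nonnegative.
  have hpos : ∀ p ∈ s, 0 ≤ p.2 := by
    intro p hp
    by_contra hneg
    push_neg at hneg
    obtain ⟨f, hf, heq⟩ := hs ∅ (Set.empty_subset _)
    have hmem : p ∈ (↑s : Set (X × ℝ)) ∩ {q | q.2 < 0 ∨ ENNReal.ofReal q.2 < f q.1} :=
      ⟨hp, Or.inl hneg⟩
    rw [heq] at hmem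
    exact hmem
  -- Step 2: distinct points of s have distinct first coordinates.
  have hinj : ∀ p ∈ s, ∀ q ∈ s, p.1 = q.1 → p = q := by
    intro p hp q hq hx
    by_contra hne
    obtain ⟨f1, hf1, he1⟩ := hs {p} (by simpa using hp)
    obtain ⟨g1, hg1, rfl⟩ := hf1
    obtain ⟨f2, hf2, he2⟩ := hs {q} (by simpa using hq)
    obtain ⟨g2, hg2, rfl⟩ := hf2
    have hp1 : ENNReal.ofReal p.2 < (g1 p.1)⁻¹ := by
      have hmem : p ∈ ({p} : Set (X × ℝ)) := rfl
      rw [← he1] at hmem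
      rcases hmem.2 with h' | h'
      · exact absurd (hpos p hp) (not_le.mpr h')
      · exact h'
    have hq1 : ¬ (ENNReal.ofReal q.2 < (g1 q.1)⁻¹) := by
      intro hc
      have hmem : q ∈ (↑s : Set (X × ℝ)) ∩ {r | r.2 < 0 ∨ ENNReal.ofReal r.2 < (g1 r.1)⁻¹} :=
        ⟨hq, Or.inr hc⟩
      rw [he1] at hmem
      exact hne (Set.mem_singleton_iff.mp hmem).symm
    have hq2 : ENNReal.ofReal q.2 < (g2 q.1)⁻¹ := by
      have hmem : q ∈ ({q} : Set (X × ℝ)) := rfl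
      rw [← he2] at hmem
      rcases hmem.2 with h' | h'
      · exact absurd (hpos q hq) (not_le.mpr h')
      · exact h'
    have hp2 : ¬ (ENNReal.ofReal p.2 < (g2 p.1)⁻¹) := by
      intro hc
      have hmem : p ∈ (↑s : Set (X × ℝ)) ∩ {r | r.2 < 0 ∨ ENNReal.ofReal r.2 < (g2 r.1)⁻¹} :=
        ⟨hp, Or.inr hc⟩
      rw [he2] at hmem
      exact hne (Set.mem_singleton_iff.mp hmem)
    rw [hx] at hp1 hp2
    have h1 : ENNReal.ofReal p.2 < ENNReal.ofReal q.2 :=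
      lt_of_lt_of_le hp1 (not_lt.mp hq1)
    have h2 : ENNReal.ofReal q.2 < ENNReal.ofReal p.2 :=
      lt_of_lt_of_le hq2 (not_lt.mp hp2)
    exact absurd h2 (not_lt.mpr h1.le)
  -- Step 3: choose, for each subset T of s, a witness g_T ∈ 𝒢.
  have key : ∀ T : Finset (X × ℝ), ∃ g, T ⊆ s →
      g ∈ 𝒢 ∧ (↑s : Set (X × ℝ)) ∩ {q | q.2 < 0 ∨ ENNReal.ofReal q.2 < (g q.1)⁻¹} = ↑T := by
    intro T
    by_cases hT : T ⊆ s
    · obtain ⟨f, hf, heq⟩ := hs ↑T (Finset.coe_subset.mpr hT)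
      obtain ⟨g, hg, rfl⟩ := hf
      exact ⟨g, fun _ => ⟨hg, heq⟩⟩
    · exact ⟨fun _ => 0, fun h' => absurd h' hT⟩
  choose gT hgT using key
  -- Definitions
  set c : X × ℝ → ℝ≥0∞ := fun p => (ENNReal.ofReal p.2)⁻¹ with hc
  set m : X × ℝ → ℝ≥0∞ := fun p =>
    ((s.powerset.filter (fun T => gT T p.1 < c p)).sup (fun T => gT T p.1)) with hm
  have hcpos : ∀ p : X × ℝ, (0 : ℝ≥0∞) < c p := fun p =>
    ENNReal.inv_pos.mpr ENNReal.ofReal_ne_top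
  have hmlt : ∀ p : X × ℝ, m p < c p := by
    intro p
    rw [hm]
    exact Finset.sup_lt_iff (by simpa using hcpos p) |>.mpr
      (fun T hT => (Finset.mem_filter.mp hT).2)
  have hmtop : ∀ p : X × ℝ, m p ≠ ⊤ := by
    intro p
    have hlt : m p < ⊤ := by
      rw [hm]
      refine Finset.sup_lt_iff (by simp) |>.mpr (fun T hT => ?_)
      have h' := (Finset.mem_filter.mp hT).2
      exact lt_top_iff_ne_top.mpr (ne_top_of_lt h')
    exact hlt.ne
  have hmsup : ∀ p : X × ℝ, ∀ T : Finset (X × ℝ), T ⊆ s → gT T p.1 < c p → gT T p.1 ≤ m p := by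
    intro p T hT hlt
    rw [hm]
    exact Finset.le_sup (f := fun T => gT T p.1) (Finset.mem_filter.mpr ⟨Finset.mem_powerset.mpr hT, hlt⟩)
  set φ : X × ℝ → X × ℝ := fun p => (p.1, (m p).toReal) with hφ
  set s' : Finset (X × ℝ) := s.image φ with hs'
  -- key equivalence on points of s: for T ⊆ s, p ∈ T ↔ gT T p.1 < c p
  have hTmem : ∀ T : Finset (X × ℝ), T ⊆ s → ∀ p ∈ s, (p ∈ T ↔ gT T p.1 < c p) := by
    intro T hT p hp
    have hset := (hgT T hT).2
    constructor
    · intro hpT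
      have hmem : p ∈ (↑T : Set (X × ℝ)) := hpT
      rw [← hset] at hmem
      rcases hmem.2 with h' | h'
      · exact absurd (hpos p hp) (not_le.mpr h')
      · exact ENNReal.lt_inv_iff_lt_inv.mp h'
    · intro hlt
      have hmem : p ∈ (↑s : Set (X × ℝ)) ∩
          {q | q.2 < 0 ∨ ENNReal.ofReal q.2 < (gT T q.1)⁻¹} :=
        ⟨hp, Or.inr (ENNReal.lt_inv_iff_lt_inv.mp hlt)⟩
      rw [hset] at hmem
      exact hmem
  -- Step 4: 𝒢 shatters s'.
  have hshatter : ShattersSubgraphENN 𝒢 s' := by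
    intro T' hT'
    set T : Finset (X × ℝ) := s.filter (fun q => φ q ∉ T') with hTdef
    have hTs : T ⊆ s := Finset.filter_subset _ _
    refine ⟨gT T, (hgT T hTs).1, ?_⟩
    ext p'
    constructor
    · rintro ⟨hp's, hcond⟩
      obtain ⟨p, hp, rfl⟩ := Finset.mem_image.mp (by exact_mod_cast hp's)
      have hnn : (0 : ℝ) ≤ (φ p).2 := ENNReal.toReal_nonneg
      have hlt : m p < gT T p.1 := by
        rcases hcond with h' | h'
        · exact absurd hnn (not_le.mpr h')
        · have h'' : ENNReal.ofReal (m p).toReal < gT T (φ p).1 := h'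
          rwa [ENNReal.ofReal_toReal (hmtop p)] at h''
      by_contra hnotin
      have hpT : p ∈ T := Finset.mem_filter.mpr ⟨hp, hnotin⟩
      have hlt' := (hTmem T hTs p hp).mp hpT
      exact absurd hlt (not_lt.mpr (hmsup p T hTs hlt'))
    · intro hpT'
      have hp's : p' ∈ (↑s' : Set (X × ℝ)) := hT' hpT'
      obtain ⟨p, hp, rfl⟩ := Finset.mem_image.mp (by exact_mod_cast hp's)
      refine ⟨hp's, Or.inr ?_⟩
      have hnotin : p ∉ T := by
        intro hpT
        exact (Finset.mem_filter.mp hpT).2 hpT'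
      have hge : ¬ (gT T p.1 < c p) := fun h' => hnotin ((hTmem T hTs p hp).mpr h')
      have hlt : m p < gT T p.1 := lt_of_lt_of_le (hmlt p) (not_lt.mp hge)
      show ENNReal.ofReal (φ p).2 < gT T (φ p).1
      simpa [hφ, ENNReal.ofReal_toReal (hmtop p)] using hlt
  -- Step 5: conclude.
  have hcard : s'.card = s.card := by
    rw [hs']
    apply Finset.card_image_of_injOn
    intro p hp q hq hpq
    exact hinj p hp q hq (by simpa [hφ] using congrArg Prod.fst hpq)
  calc s.card = s'.card := hcard.symm
    _ ≤ V := h s' hshatter
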